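/- For every integer n, the product of the bicomplex Pell number BP(n) with its ij-conjugate satisfies BP(n) · (BP(n))*_{ij} = 6·P(2n+3)·1 + 4·(−1)^{n+1}·ij. -/

import Mathlib

/-!
Expanding the product with `i² = j² = -1` and `ij = ji` gives
`BP n · BP n*_{ij} = (P₀² + P₁² + P₂² + P₃²) + 2 (P₀P₃ - P₁P₂) ij`, writing `Pₖ = P (n + k)`.
The scalar part is `6 P (2n+3)` by the addition formula `P (2n+3) = P (n+2)² + P (n+1)²`, and
the `ij`-part reduces through the recurrence to twice Cassini's identity
`P (n+2) P n - P (n+1)² = (-1)^(n+1)`.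
-/

open scoped TensorProduct

noncomputable def bi : ℂ ⊗[ℝ] ℂ := Complex.I ⊗ₜ[ℝ] 1
noncomputable def bj : ℂ ⊗[ℝ] ℂ := (1 : ℂ) ⊗ₜ[ℝ] Complex.I
noncomputable def bij : ℂ ⊗[ℝ] ℂ := Complex.I ⊗ₜ[ℝ] Complex.I

/-- The bicomplex Pell number `BP n = P n + P (n+1) i + P (n+2) j + P (n+3) ij`. -/
noncomputable def BP (P : ℤ → ℤ) (n : ℤ) : ℂ ⊗[ℝ] ℂ :=
  (P n : ℝ) • (1 : ℂ ⊗[ℝ] ℂ) + (P (n + 1) : ℝ) • bi + (P (n + 2) : ℝ) • bj +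
    (P (n + 3) : ℝ) • bij

/-- The ij-conjugate of the bicomplex Pell number. -/
noncomputable def BPconjIJ (P : ℤ → ℤ) (n : ℤ) : ℂ ⊗[ℝ] ℂ :=
  (P n : ℝ) • (1 : ℂ ⊗[ℝ] ℂ) - (P (n + 1) : ℝ) • bi - (P (n + 2) : ℝ) • bj +
    (P (n + 3) : ℝ) • bij

section Bicomplex

open Algebra.TensorProduct TensorProduct

lemma bi_mul_bi : bi * bi = -1 := by
  simp [bi, tmul_mul_tmul, one_def, neg_tmul]

lemma bj_mul_bj : bj * bj = -1 := by
  simp [bj, tmul_mul_tmul, one_def, tmul_neg]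

lemma bi_mul_bj : bi * bj = bij := by
  simp [bi, bj, bij, tmul_mul_tmul]

lemma mul_conj_of_mul_self_eq_neg_one {R A : Type*} [CommRing R] [CommRing A] [Algebra R A]
    {e f : A} (he : e * e = -1) (hf : f * f = -1) (a b c d : R) :
    (a • 1 + b • e + c • f + d • (e * f)) * (a • 1 - b • e - c • f + d • (e * f)) =
      (a ^ 2 + b ^ 2 + c ^ 2 + d ^ 2) • 1 + (2 * (a * d - b * c)) • (e * f) := by
  simp only [Algebra.smul_def, mul_one, map_add, map_mul, map_sub, map_pow, map_ofNat]
  linear_combination (-(algebraMap R A b) ^ 2 + (algebraMap R A d) ^ 2 * f * f) * he +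
    (-(algebraMap R A c) ^ 2 - (algebraMap R A d) ^ 2) * hf

lemma bicomplex_mul_conjIJ (a b c d : ℝ) :
    (a • 1 + b • bi + c • bj + d • bij) * (a • 1 - b • bi - c • bj + d • bij) =
      (a ^ 2 + b ^ 2 + c ^ 2 + d ^ 2) • (1 : ℂ ⊗[ℝ] ℂ) + (2 * (a * d - b * c)) • bij := by
  rw [← bi_mul_bj]
  exact mul_conj_of_mul_self_eq_neg_one bi_mul_bi bj_mul_bj a b c d

end Bicomplex

lemma eq_neg_one_zpow_mul_of_succ_eq_neg {f : ℤ → ℝ} (hf : ∀ n, f (n + 1) = -f n) (n : ℤ) :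
    f n = (-1) ^ n * f 0 := by
  induction n using Int.induction_on with
  | zero => simp
  | succ k ih => rw [hf, ih, zpow_add_one₀ (by norm_num)]; ring
  | pred k ih =>
    have h := hf (-k - 1)
    rw [sub_add_cancel, ih] at h
    rw [zpow_sub_one₀ (by norm_num)]
    linear_combination h

section PellRecurrence

variable {P : ℤ → ℤ}

lemma pell_recurrence_ext {Q : ℤ → ℤ} (hP : ∀ n : ℤ, P (n + 2) = 2 * P (n + 1) + P n)
    (hQ : ∀ n : ℤ, Q (n + 2) = 2 * Q (n + 1) + Q n) (h0 : P 0 = Q 0) (h1 : P 1 = Q 1) :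
    P = Q := by
  suffices h : ∀ n : ℤ, P n = Q n ∧ P (n + 1) = Q (n + 1) from funext fun n => (h n).1
  intro n
  induction n using Int.induction_on with
  | zero => exact ⟨h0, h1⟩
  | succ k ih =>
    refine ⟨ih.2, ?_⟩
    rw [add_assoc, one_add_one_eq_two, hP, hQ, ih.1, ih.2]
  | pred k ih =>
    have hPk := hP (-k - 1)
    have hQk := hQ (-k - 1)
    rw [show -(k : ℤ) - 1 + 2 = -k + 1 by ring, show -(k : ℤ) - 1 + 1 = -k by ring] at hPk hQk
    rw [sub_add_cancel]
    exact ⟨by linarith [ih.1, ih.2], ih.1⟩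

variable (hP : ∀ n : ℤ, P (n + 2) = 2 * P (n + 1) + P n)
include hP

lemma pell_add_add_one (hP0 : P 0 = 0) (hP1 : P 1 = 1) (m k : ℤ) :
    P (m + k + 1) = P (m + 1) * P (k + 1) + P m * P k := by
  have hP2 : P 2 = 2 := by simpa [hP0, hP1] using hP 0
  have h := pell_recurrence_ext (P := fun k => P (m + k + 1))
    (Q := fun k => P (m + 1) * P (k + 1) + P m * P k)
    (fun k => by
      rw [show m + (k + 2) + 1 = m + k + 1 + 2 by ring,
        show m + (k + 1) + 1 = m + k + 1 + 1 by ring]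
      exact hP (m + k + 1))
    (fun k => by
      rw [show k + 2 + 1 = k + 1 + 2 by ring]
      linear_combination P (m + 1) * hP (k + 1) + P m * hP k)
    (by simp [hP0, hP1])
    (by
      rw [one_add_one_eq_two, hP2, hP1, add_assoc, one_add_one_eq_two, hP m]
      ring)
  exact congrFun h k

lemma pell_add_three (n : ℤ) : P (n + 3) = 2 * P (n + 2) + P (n + 1) := by
  simpa only [add_assoc, Int.reduceAdd] using hP (n + 1)

lemma pell_cassini_succ (n : ℤ) :
    P (n + 3) * P (n + 1) - P (n + 2) ^ 2 = -(P (n + 2) * P n - P (n + 1) ^ 2) := by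
  linear_combination P (n + 1) * pell_add_three hP n - P (n + 2) * hP n

lemma pell_mul_add_three_sub (n : ℤ) :
    P n * P (n + 3) - P (n + 1) * P (n + 2) = 2 * (P (n + 2) * P n - P (n + 1) ^ 2) := by
  linear_combination P n * pell_add_three hP n - P (n + 1) * hP n

variable (hP0 : P 0 = 0) (hP1 : P 1 = 1)
include hP0 hP1

lemma pell_cassini (n : ℤ) : ((P (n + 2) * P n - P (n + 1) ^ 2 : ℤ) : ℝ) = (-1) ^ (n + 1) := by
  have hsucc (n : ℤ) : P (n + 1 + 2) * P (n + 1) - P (n + 1 + 1) ^ 2 =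
      -(P (n + 2) * P n - P (n + 1) ^ 2) := by
    simpa only [add_assoc, Int.reduceAdd] using pell_cassini_succ hP n
  rw [eq_neg_one_zpow_mul_of_succ_eq_neg
    (f := fun n => ((P (n + 2) * P n - P (n + 1) ^ 2 : ℤ) : ℝ))
    (fun n => by simp only [hsucc, Int.cast_neg]) n]
  simp [hP0, hP1, zpow_add_one₀]

lemma pell_sq_add_sq_add_sq_add_sq (n : ℤ) :
    P n ^ 2 + P (n + 1) ^ 2 + P (n + 2) ^ 2 + P (n + 3) ^ 2 = 6 * P (2 * n + 3) := by
  have hdouble := pell_add_add_one hP hP0 hP1 (n + 1) (n + 1)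
  rw [show n + 1 + (n + 1) + 1 = 2 * n + 3 by ring, add_assoc n 1 1, one_add_one_eq_two] at hdouble
  linear_combination -6 * hdouble + (P (n + 3) + 2 * P (n + 2) + P (n + 1)) * pell_add_three hP n -
    (P (n + 2) - 2 * P (n + 1) + P n) * hP n

end PellRecurrence

theorem bicomplexPell_mul_conjIJ (P : ℤ → ℤ)
    (hP : ∀ n : ℤ, P (n + 2) = 2 * P (n + 1) + P n) (hP0 : P 0 = 0) (hP1 : P 1 = 1)
    (n : ℤ) :
    BP P n * BPconjIJ P n =
      (6 * (P (2 * n + 3) : ℝ)) • (1 : ℂ ⊗[ℝ] ℂ) +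
        (4 * (-1 : ℝ) ^ (n + 1)) • bij := by
  rw [BP, BPconjIJ, bicomplex_mul_conjIJ]
  congr 2
  · exact_mod_cast pell_sq_add_sq_add_sq_add_sq hP hP0 hP1 n
  · rw [← pell_cassini hP hP0 hP1 n]
    have hcross := congrArg (Int.cast : ℤ → ℝ) (pell_mul_add_three_sub hP n)
    push_cast at hcross ⊢
    linear_combination 2 * hcross
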